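/- arXiv:2210.11450 — 3 statements merged into one kernel-verified Lean document; each statement's English description precedes it below -/
import Mathlib

section
/- Let d ≥ 2, let η > 0, and let 𝒮 be a finite family of nondegenerate d-simplices in ℝ^d whose interiors are pairwise disjoint. Suppose every simplex S ∈ 𝒮 satisfies the regularity condition vol(S) ≥ η · h(S)^d, where vol(S) is the d-dimensional Lebesgue measure of (the convex hull of) S and h(S) is the length of its longest edge. Then for every point γ₀ ∈ ℝ^d, the number of simplices S ∈ 𝒮 with γ₀ ∈ S is at most (1/η) · (2eπ/d)^{d/2}. -/
open MeasureTheory Set Metric Module Real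

/-!
Shrink every simplex containing `γ₀` towards `γ₀` by the factor `r / h(S)`, where `r` is the
least of their longest edges. The shrunken copies lie inside the original simplices, so their
interiors are still pairwise disjoint; they all lie in the closed ball of radius `r` about `γ₀`;
and by regularity each has volume at least `η r^d`. Hence there are at most
`vol(B₁) / η = π^(d/2) / (η Γ(d/2 + 1))` of them, and `Γ(x + 1) ≥ (x / e)^x` gives the bound.
-/

theorem Real.div_exp_one_rpow_self_le_Gamma_add_one {x : ℝ} (hx : 0 < x) :
    (x / exp 1) ^ x ≤ Gamma (x + 1) := by
  have hint : IntegrableOn (fun t : ℝ => exp (-t) * t ^ x) (Ioi 0) := by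
    simpa using GammaIntegral_convergent (s := x + 1) (by linarith)
  calc (x / exp 1) ^ x = ∫ t in Ioi x, exp (-t) * x ^ x := by
        rw [integral_mul_const, integral_exp_neg_Ioi, div_rpow hx.le (exp_pos 1).le,
          exp_one_rpow, exp_neg, div_eq_inv_mul]
    _ ≤ ∫ t in Ioi x, exp (-t) * t ^ x := by
        refine setIntegral_mono_on ((exp_neg_integrableOn_Ioi x one_pos).congr_fun
          (fun t _ => by simp) measurableSet_Ioi |>.mul_const _)
          (hint.mono_set (Ioi_subset_Ioi hx.le)) measurableSet_Ioi fun t ht => ?_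
        gcongr
        exact ht.le
    _ ≤ ∫ t in Ioi 0, exp (-t) * t ^ x := by
        refine setIntegral_mono_set hint ?_ (Ioi_subset_Ioi hx.le).eventuallyLE
        filter_upwards [ae_restrict_mem measurableSet_Ioi] with t ht
        exact mul_nonneg (exp_pos _).le (rpow_nonneg (le_of_lt ht) _)
    _ = Gamma (x + 1) := by
        rw [Gamma_eq_integral (by linarith)]
        simp

theorem Real.sqrt_pi_pow_div_Gamma_le {n : ℕ} (hn : n ≠ 0) :
    √π ^ n / Gamma (n / 2 + 1) ≤ (2 * exp 1 * π / n) ^ ((n : ℝ) / 2) := by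
  have hx : 0 < (n : ℝ) / 2 := by positivity
  calc √π ^ n / Gamma (n / 2 + 1) = π ^ ((n : ℝ) / 2) / Gamma (n / 2 + 1) := by
        rw [sqrt_eq_rpow, ← rpow_natCast, ← rpow_mul pi_pos.le]
        ring_nf
    _ ≤ π ^ ((n : ℝ) / 2) / ((n / 2) / exp 1) ^ ((n : ℝ) / 2) := by
        gcongr
        exact div_exp_one_rpow_self_le_Gamma_add_one hx
    _ = (2 * exp 1 * π / n) ^ ((n : ℝ) / 2) := by
        rw [← div_rpow pi_pos.le (by positivity)]
        congr 1
        field_simp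

namespace Affine.Simplex

variable {V P : Type*} [NormedAddCommGroup V] [NormedSpace ℝ V] [MetricSpace P]
  [NormedAddTorsor V P] {n : ℕ}

noncomputable def longestEdge (s : Simplex ℝ P n) : ℝ :=
  ⨆ a : Fin (n + 1), ⨆ b : Fin (n + 1), dist (s.points a) (s.points b)

theorem dist_le_longestEdge (s : Simplex ℝ P n) (a b : Fin (n + 1)) :
    dist (s.points a) (s.points b) ≤ s.longestEdge :=
  (le_ciSup (finite_range _).bddAbove b).trans
    (le_ciSup (f := fun a => ⨆ b, dist (s.points a) (s.points b)) (finite_range _).bddAbove a)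

theorem longestEdge_pos (s : Simplex ℝ P n) (hn : n ≠ 0) : 0 < s.longestEdge := by
  have h0 : (0 : Fin (n + 1)) ≠ Fin.last n := fun h => hn (by simpa using congrArg Fin.val h.symm)
  exact (dist_pos.2 (s.independent.injective.ne h0)).trans_le (s.dist_le_longestEdge _ _)

theorem diam_convexHull_le_longestEdge (s : Simplex ℝ V n) :
    diam (convexHull ℝ (range s.points)) ≤ s.longestEdge := by
  rw [convexHull_diam]
  refine diam_le_of_forall_dist_le (dist_nonneg.trans (s.dist_le_longestEdge 0 0)) ?_
  rintro _ ⟨a, rfl⟩ _ ⟨b, rfl⟩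
  exact s.dist_le_longestEdge a b

theorem convexHull_subset_closedBall_longestEdge (s : Simplex ℝ V n) {x : V}
    (hx : x ∈ convexHull ℝ (range s.points)) :
    convexHull ℝ (range s.points) ⊆ closedBall x s.longestEdge := fun _ hy =>
  (dist_le_diam_of_mem (isBounded_convexHull.2 (finite_range _).isBounded) hy hx).trans
    s.diam_convexHull_le_longestEdge

end Affine.Simplex

section Homothety

variable {E : Type*} [NormedAddCommGroup E] [NormedSpace ℝ E]

theorem Convex.image_homothety_subset {s : Set E} (hs : Convex ℝ s) {x : E} (hx : x ∈ s)
    {c : ℝ} (hc₀ : 0 ≤ c) (hc₁ : c ≤ 1) : AffineMap.homothety x c '' s ⊆ s := by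
  rintro _ ⟨y, hy, rfl⟩
  rw [AffineMap.homothety_eq_lineMap]
  exact hs.lineMap_mem hx hy ⟨hc₀, hc₁⟩

theorem image_homothety_closedBall_subset (x : E) {c : ℝ} (hc : 0 ≤ c) (r : ℝ) :
    AffineMap.homothety x c '' closedBall x r ⊆ closedBall x (c * r) := by
  rintro _ ⟨y, hy, rfl⟩
  rw [mem_closedBall, dist_homothety_center, Real.norm_of_nonneg hc, dist_comm]
  exact mul_le_mul_of_nonneg_left hy hc

end Homothety

section AddHaar

variable {E : Type*} [NormedAddCommGroup E] [NormedSpace ℝ E] [MeasurableSpace E] [BorelSpace E]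
  [FiniteDimensional ℝ E] (μ : Measure E) [μ.IsAddHaarMeasure]

theorem Finset.card_mul_le_addHaar_of_convex {ι : Type*} {T : Finset ι} {K : ι → Set E}
    {B : Set E} {v : ENNReal} (hconv : ∀ i ∈ T, Convex ℝ (K i))
    (hdisj : (T : Set ι).PairwiseDisjoint fun i => interior (K i)) (hsub : ∀ i ∈ T, K i ⊆ B)
    (hv : ∀ i ∈ T, v ≤ μ (K i)) : T.card * v ≤ μ B :=
  calc T.card * v = ∑ i ∈ T, v := by rw [Finset.sum_const, nsmul_eq_mul]
    _ ≤ ∑ i ∈ T, μ (interior (K i)) := Finset.sum_le_sum fun i hi => by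
        rw [measure_interior_of_null_frontier ((hconv i hi).addHaar_frontier μ)]
        exact hv i hi
    _ = μ (⋃ i ∈ T, interior (K i)) :=
        (measure_biUnion_finset hdisj fun _ _ => isOpen_interior.measurableSet).symm
    _ ≤ μ B := measure_mono <| iUnion₂_subset fun i hi => interior_subset.trans (hsub i hi)

theorem ofReal_mul_pow_le_addHaar_image_homothety {s : Set E} (x : E) {c η h : ℝ} (hc : 0 ≤ c)
    (hreg : η * h ^ finrank ℝ E ≤ μ.real s) :
    ENNReal.ofReal (η * (c * h) ^ finrank ℝ E) ≤ μ (AffineMap.homothety x c '' s) := by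
  rw [Measure.addHaar_image_homothety, abs_of_nonneg (pow_nonneg hc _), mul_pow, mul_left_comm,
    ENNReal.ofReal_mul (pow_nonneg hc _)]
  gcongr
  exact ENNReal.ofReal_le_of_le_toReal hreg

theorem Affine.Simplex.card_mul_le_addHaar_closedBall_of_regular {ι : Type*} {n : ℕ} (hn : n ≠ 0)
    {T : Finset ι} {s : ι → Affine.Simplex ℝ E n} {x : E} {η : ℝ}
    (hx : ∀ i ∈ T, x ∈ convexHull ℝ (range (s i).points))
    (hdisj : (T : Set ι).PairwiseDisjoint fun i => interior (convexHull ℝ (range (s i).points)))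
    (hreg : ∀ i ∈ T,
      η * (s i).longestEdge ^ finrank ℝ E ≤ μ.real (convexHull ℝ (range (s i).points))) :
    T.card * ENNReal.ofReal η ≤ μ (closedBall 0 1) := by
  rcases T.eq_empty_or_nonempty with rfl | hT
  · simp
  set r := T.inf' hT fun i => (s i).longestEdge
  have hr : 0 < r := (T.lt_inf'_iff _).2 fun i _ => (s i).longestEdge_pos hn
  set c : ι → ℝ := fun i => r / (s i).longestEdge
  have hc₀ : ∀ i, 0 ≤ c i := fun i => div_nonneg hr.le ((s i).longestEdge_pos hn).le
  have hc₁ : ∀ i ∈ T, c i ≤ 1 := fun i hi =>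
    div_le_one_of_le₀ (T.inf'_le _ hi) ((s i).longestEdge_pos hn).le
  have hch : ∀ i, c i * (s i).longestEdge = r := fun i =>
    div_mul_cancel₀ r ((s i).longestEdge_pos hn).ne'
  set K : ι → Set E := fun i => AffineMap.homothety x (c i) '' convexHull ℝ (range (s i).points)
  have hK_hull : ∀ i ∈ T, K i ⊆ convexHull ℝ (range (s i).points) := fun i hi =>
    (convex_convexHull ℝ _).image_homothety_subset (hx i hi) (hc₀ i) (hc₁ i hi)
  have hK_ball : ∀ i ∈ T, K i ⊆ closedBall x r := fun i hi => by
    rw [← hch i]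
    exact (image_mono ((s i).convexHull_subset_closedBall_longestEdge (hx i hi))).trans
      (image_homothety_closedBall_subset x (hc₀ i) _)
  have hpack := T.card_mul_le_addHaar_of_convex μ
    (fun i _ => (convex_convexHull ℝ _).affine_image (AffineMap.homothety x (c i)))
    (hdisj.mono_on fun i hi => interior_mono (hK_hull i hi)) hK_ball
    fun i hi => hch i ▸ ofReal_mul_pow_le_addHaar_image_homothety μ x (hc₀ i) (hreg i hi)
  rw [ENNReal.ofReal_mul' (pow_nonneg hr.le _), Measure.addHaar_closedBall' μ x hr.le, ← mul_assoc,
    mul_comm _ (ENNReal.ofReal _)] at hpack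
  exact (ENNReal.mul_le_mul_iff_right (by positivity) ENNReal.ofReal_ne_top).1 hpack

end AddHaar

/-- **Maximum intersection number of regular simplicial partitions.**
Let `d ≥ 2`, `η > 0`, and let `S : ι → Affine.Simplex _ _ d` be a finite family of
(nondegenerate) `d`-simplices in `ℝ^d` whose interiors are pairwise disjoint.
If every simplex satisfies the regularity condition `vol(S i) ≥ η * h(S i)^d`
(where `h` is the longest edge length), then every point `γ₀` lies in at most
`(1/η) * (2*e*π/d)^(d/2)` of the simplices. -/
theorem max_intersection_number_of_regular_simplices
    (d : ℕ) (hd : 2 ≤ d) (η : ℝ) (hη : 0 < η)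
    (ι : Type*) [Fintype ι]
    (S : ι → Affine.Simplex ℝ (EuclideanSpace ℝ (Fin d)) d)
    (hdisj : ∀ i j : ι, i ≠ j →
      interior (convexHull ℝ (Set.range (S i).points)) ∩
        interior (convexHull ℝ (Set.range (S j).points)) = ∅)
    (hreg : ∀ i : ι,
      η * (⨆ a : Fin (d + 1), ⨆ b : Fin (d + 1),
              dist ((S i).points a) ((S i).points b)) ^ d ≤
        (volume (convexHull ℝ (Set.range (S i).points))).toReal)
    (γ₀ : EuclideanSpace ℝ (Fin d)) :
    ({i : ι | γ₀ ∈ convexHull ℝ (Set.range (S i).points)}.ncard : ℝ) ≤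
      (1 / η) * ((2 * Real.exp 1 * Real.pi / d) ^ ((d : ℝ) / 2)) := by
  classical
  have hd₀ : d ≠ 0 := by omega
  set T := Finset.univ.filter fun i => γ₀ ∈ convexHull ℝ (range (S i).points)
  have hncard : {i : ι | γ₀ ∈ convexHull ℝ (range (S i).points)}.ncard = T.card := by
    rw [← Set.ncard_coe_finset]
    simp [T]
  have hpack := Affine.Simplex.card_mul_le_addHaar_closedBall_of_regular volume hd₀ (T := T)
    (x := γ₀) (by simp [T]) (fun i _ j _ hij => Set.disjoint_iff_inter_eq_empty.2 (hdisj i j hij))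
    (fun i _ => by rw [finrank_euclideanSpace_fin]; exact hreg i)
  have : Nonempty (Fin d) := ⟨⟨0, by omega⟩⟩
  have hball : volume.real (closedBall (0 : EuclideanSpace ℝ (Fin d)) 1) =
      √π ^ d / Gamma (d / 2 + 1) := by
    rw [measureReal_def, EuclideanSpace.volume_closedBall, Fintype.card_fin, ENNReal.ofReal_one,
      one_pow, one_mul, ENNReal.toReal_ofReal (by positivity)]
  have hcard : (T.card : ℝ) * η ≤ √π ^ d / Gamma (d / 2 + 1) := by
    rw [← hball, ← ENNReal.toReal_ofReal hη.le, ← ENNReal.toReal_natCast, ← ENNReal.toReal_mul]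
    exact ENNReal.toReal_mono measure_closedBall_lt_top.ne hpack
  rw [hncard, one_div_mul_eq_div, le_div_iff₀ hη]
  exact hcard.trans (sqrt_pi_pow_div_Gamma_le hd₀)
end

section
/- Let d ≥ 2 and let S be a d-simplex in ℝ^d having the origin 0 as one of its vertices. Then for every t > 0, the Gaussian integral over the cone generated by S satisfies ∫_{cone(S)} e^{−‖γ‖²} dγ ≥ t^d · vol(S) · e^{−t² · dia(S)²}, where cone(S) = { t'·γ' : t' ≥ 0, γ' ∈ S } is the cone over S with apex at the origin, vol(S) is the d-dimensional Lebesgue measure of the convex hull of S, and dia(S) is the diameter of the convex hull of S. -/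
/-!
Since `S` contains the origin, the cone over `S` contains the dilate `t • S` for every `t > 0`.
Every point of `t • S` has norm at most `t · dia(S)`, so the Gaussian is at least
`exp (-t² dia(S)²)` there, while `vol (t • S) = t^d vol(S)`.
-/

open MeasureTheory Set Pointwise

theorem norm_le_abs_mul_diam_of_mem_smul {E : Type*} [SeminormedAddCommGroup E]
    [NormedSpace ℝ E] {K : Set E} (hK : Bornology.IsBounded K) (h0 : (0 : E) ∈ K) {t : ℝ}
    {y : E} (hy : y ∈ t • K) : ‖y‖ ≤ |t| * Metric.diam K := by
  obtain ⟨x, hx, rfl⟩ := hy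
  rw [norm_smul, Real.norm_eq_abs]
  gcongr
  simpa using Metric.dist_le_diam_of_mem hK hx h0

section InnerProductSpace

variable {V : Type*} [NormedAddCommGroup V] [InnerProductSpace ℝ V] [FiniteDimensional ℝ V]
  [MeasurableSpace V] [BorelSpace V]

theorem integrable_exp_neg_norm_sq (μ : Measure V) [μ.IsAddHaarMeasure] :
    Integrable (fun v : V ↦ Real.exp (-‖v‖ ^ 2)) μ := by
  have hvolume : Integrable (fun v : V ↦ Real.exp (-‖v‖ ^ 2)) := by
    convert (GaussianFourier.integrable_cexp_neg_mul_sq_norm_add (V := V) (b := 1)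
      (by norm_num) 0 0).norm using 2 with v
    rw [Complex.norm_exp]
    norm_cast
    simp
  rw [μ.isAddLeftInvariant_eq_smul volume]
  exact hvolume.smul_measure ENNReal.coe_ne_top

theorem abs_pow_mul_measureReal_mul_exp_le_setIntegral_smul (μ : Measure V)
    [μ.IsAddHaarMeasure] {K : Set V} (hK : IsCompact K) (h0 : (0 : V) ∈ K) (t : ℝ) :
    |t| ^ Module.finrank ℝ V * μ.real K * Real.exp (-t ^ 2 * Metric.diam K ^ 2) ≤
      ∫ y in t • K, Real.exp (-‖y‖ ^ 2) ∂μ := by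
  have hbound : ∀ y ∈ t • K, Real.exp (-t ^ 2 * Metric.diam K ^ 2) ≤ Real.exp (-‖y‖ ^ 2) := by
    intro y hy
    have hy_sq := pow_le_pow_left₀ (norm_nonneg y)
      (norm_le_abs_mul_diam_of_mem_smul hK.isBounded h0 hy) 2
    rw [mul_pow, sq_abs] at hy_sq
    exact Real.exp_le_exp.2 (by linarith)
  have hvol : μ.real (t • K) = |t| ^ Module.finrank ℝ V * μ.real K := by
    simp [measureReal_def, Measure.addHaar_smul, abs_pow]
  calc
    _ = Real.exp (-t ^ 2 * Metric.diam K ^ 2) * μ.real (t • K) := by rw [hvol]; ring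
    _ ≤ _ := setIntegral_ge_of_const_le_real (hK.smul t).measurableSet
        (hK.smul t).measure_lt_top.ne hbound (integrable_exp_neg_norm_sq μ).integrableOn

end InnerProductSpace

theorem gaussian_integral_cone_lower_bound_general
    (d : ℕ)
    (S : Affine.Simplex ℝ (EuclideanSpace ℝ (Fin d)) d)
    (h0 : ∃ i : Fin (d + 1), S.points i = 0)
    (t : ℝ) (ht : 0 < t) :
    t ^ d * (volume (convexHull ℝ (Set.range S.points))).toReal *
        Real.exp (-t ^ 2 * Metric.diam (convexHull ℝ (Set.range S.points)) ^ 2) ≤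
      ∫ γ in {x : EuclideanSpace ℝ (Fin d) |
          ∃ t' : ℝ, 0 ≤ t' ∧ ∃ γ' ∈ convexHull ℝ (Set.range S.points), x = t' • γ'},
        Real.exp (-‖γ‖ ^ 2) := by
  set K := convexHull ℝ (Set.range S.points)
  obtain ⟨i, hi⟩ := h0
  have h0K : 0 ∈ K := hi ▸ subset_convexHull ℝ _ ⟨i, rfl⟩
  have hK : IsCompact K := (Set.finite_range S.points).isCompact_convexHull ℝ
  have hcone : t • K ⊆ {x | ∃ t' : ℝ, 0 ≤ t' ∧ ∃ γ' ∈ K, x = t' • γ'} := by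
    rintro _ ⟨γ', hγ', rfl⟩
    exact ⟨t, ht.le, γ', hγ', rfl⟩
  calc
    _ = |t| ^ Module.finrank ℝ (EuclideanSpace ℝ (Fin d)) * volume.real K *
        Real.exp (-t ^ 2 * Metric.diam K ^ 2) := by
      rw [finrank_euclideanSpace_fin, abs_of_pos ht, measureReal_def]
    _ ≤ _ := abs_pow_mul_measureReal_mul_exp_le_setIntegral_smul volume hK h0K t
    _ ≤ _ := setIntegral_mono_set (integrable_exp_neg_norm_sq volume).integrableOn
        (.of_forall fun _ ↦ (Real.exp_pos _).le) hcone.eventuallyLE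

/-- **Lower bound for the Gaussian integral over the cone generated by a simplex.**
Let `d ≥ 2` and let `S` be a `d`-simplex in `ℝ^d` having the origin as one of its vertices.
Then for every `t > 0`,
`∫_{cone(S)} e^{-‖γ‖²} dγ ≥ t^d * vol(S) * e^{-t² * dia(S)²}`,
where `cone(S) = {t' • γ' : t' ≥ 0, γ' ∈ convexHull S}`. -/
theorem gaussian_integral_cone_lower_bound
    (d : ℕ) (hd : 2 ≤ d)
    (S : Affine.Simplex ℝ (EuclideanSpace ℝ (Fin d)) d)
    (h0 : ∃ i : Fin (d + 1), S.points i = 0)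
    (t : ℝ) (ht : 0 < t) :
    t ^ d * (volume (convexHull ℝ (Set.range S.points))).toReal *
        Real.exp (-t ^ 2 * Metric.diam (convexHull ℝ (Set.range S.points)) ^ 2) ≤
      ∫ γ in {x : EuclideanSpace ℝ (Fin d) |
          ∃ t' : ℝ, 0 ≤ t' ∧ ∃ γ' ∈ convexHull ℝ (Set.range S.points), x = t' • γ'},
        Real.exp (-‖γ‖ ^ 2) :=
  gaussian_integral_cone_lower_bound_general d S h0 t ht
end

section
/- Let d ≥ 2, let η > 0, and let S be a d-simplex in ℝ^d having the origin 0 as one of its vertices and satisfying the regularity condition vol(S) ≥ η · h(S)^d, where h(S) is the length of the longest edge of S. Then the Gaussian integral over the cone generated by S satisfies ∫_{cone(S)} e^{−‖γ‖²} dγ ≥ η · (d/2)^{d/2} · e^{−d/2}, where cone(S) = { t·γ' : t ≥ 0, γ' ∈ S }. -/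
/-! Every point of the simplex `K = conv S` lies within `h = h(S)` of the vertex `0`, so for
`ρ ≥ 0` the dilate `(ρ / h) • K` lies in the closed ball of radius `ρ` and inside `cone(S)`.
On it the Gaussian is at least `exp (-ρ²)`, while its volume is
`(ρ / h)^d vol(K) ≥ η ρ^d` by regularity. Hence the Gaussian integral over the cone is at least
`η ρ^d exp (-ρ²)`, and `ρ = √(d/2)` maximises this bound. -/

open MeasureTheory Set Metric Pointwise Module Real

theorem dist_le_iSup₂_dist {ι P : Type*} [Finite ι] [PseudoMetricSpace P] (p : ι → P)
    (i j : ι) : dist (p i) (p j) ≤ ⨆ i, ⨆ j, dist (p i) (p j) :=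
  Finite.le_ciSup_of_le i (Finite.le_ciSup (fun j ↦ dist (p i) (p j)) j)

theorem Affine.Simplex.iSup₂_dist_pos {k V P : Type*} [Ring k] [Nontrivial k] [AddCommGroup V]
    [Module k V] [AddTorsor V P] [MetricSpace P] {n : ℕ} (S : Affine.Simplex k P n) (hn : 0 < n) :
    0 < ⨆ i, ⨆ j, dist (S.points i) (S.points j) := by
  have hne : (0 : Fin (n + 1)) ≠ Fin.last n := by simp [Fin.ext_iff, hn.ne]
  exact (dist_pos.2 fun h ↦ hne (S.independent.injective h)).trans_le
    (dist_le_iSup₂_dist S.points 0 (Fin.last n))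

def cone {V : Type*} [AddCommGroup V] [Module ℝ V] (K : Set V) : Set V :=
  {x | ∃ t : ℝ, 0 ≤ t ∧ ∃ y ∈ K, x = t • y}

theorem smul_subset_cone {V : Type*} [AddCommGroup V] [Module ℝ V] {r : ℝ} (hr : 0 ≤ r)
    (K : Set V) : r • K ⊆ cone K := by
  rintro _ ⟨y, hy, rfl⟩
  exact ⟨r, hr, y, hy, rfl⟩

section Gaussian

variable {V : Type*} [NormedAddCommGroup V] [InnerProductSpace ℝ V] [FiniteDimensional ℝ V]
  [MeasurableSpace V] [BorelSpace V]

theorem integrable_exp_neg_sq_norm : Integrable fun x : V ↦ exp (-‖x‖ ^ 2) := by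
  convert (GaussianFourier.integrable_cexp_neg_mul_sq_norm_add (V := V) (b := 1) (by simp)
    0 0).norm using 2 with x
  simp [Complex.norm_exp, ← Complex.ofReal_pow]

theorem exp_neg_sq_mul_volume_le_setIntegral_exp_neg_sq_norm {T C : Set V}
    (hT : MeasurableSet T) (hTC : T ⊆ C) {ρ : ℝ} (hTρ : T ⊆ closedBall 0 ρ) :
    exp (-ρ ^ 2) * (volume T).toReal ≤ ∫ x in C, exp (-‖x‖ ^ 2) := by
  have hbound : ∀ x ∈ T, exp (-ρ ^ 2) ≤ exp (-‖x‖ ^ 2) := fun x hx ↦ by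
    have hxρ : ‖x‖ ≤ ρ := by simpa using hTρ hx
    gcongr
  calc exp (-ρ ^ 2) * (volume T).toReal
      ≤ ∫ x in T, exp (-‖x‖ ^ 2) :=
        setIntegral_ge_of_const_le_real hT
          ((measure_mono hTρ).trans_lt measure_closedBall_lt_top).ne hbound
          integrable_exp_neg_sq_norm.integrableOn
    _ ≤ ∫ x in C, exp (-‖x‖ ^ 2) :=
        setIntegral_mono_set integrable_exp_neg_sq_norm.integrableOn
          (Filter.Eventually.of_forall fun x ↦ (exp_pos _).le) hTC.eventuallyLE

theorem mul_pow_mul_exp_neg_sq_le_setIntegral_cone {K : Set V} (hK : IsCompact K)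
    {h η ρ : ℝ} (hh : 0 < h) (hKh : K ⊆ closedBall 0 h)
    (hvol : η * h ^ finrank ℝ V ≤ (volume K).toReal) (hρ : 0 ≤ ρ) :
    η * ρ ^ finrank ℝ V * exp (-ρ ^ 2) ≤ ∫ x in cone K, exp (-‖x‖ ^ 2) := by
  set r := ρ / h
  have hr : 0 ≤ r := div_nonneg hρ hh.le
  have hball : r • K ⊆ closedBall 0 ρ := by
    calc r • K ⊆ r • closedBall 0 h := smul_set_mono hKh
      _ = closedBall 0 ρ := by
        rw [smul_closedBall r 0 hh.le, smul_zero, Real.norm_of_nonneg hr,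
          div_mul_cancel₀ ρ hh.ne']
  have hvol_smul : η * ρ ^ finrank ℝ V ≤ (volume (r • K)).toReal := by
    rw [Measure.addHaar_smul_of_nonneg volume hr, ENNReal.toReal_mul,
      ENNReal.toReal_ofReal (by positivity)]
    calc η * ρ ^ finrank ℝ V = r ^ finrank ℝ V * (η * h ^ finrank ℝ V) := by
          rw [← div_mul_cancel₀ ρ hh.ne', mul_pow]; ring
      _ ≤ r ^ finrank ℝ V * (volume K).toReal := by gcongr
  calc η * ρ ^ finrank ℝ V * exp (-ρ ^ 2)
      ≤ exp (-ρ ^ 2) * (volume (r • K)).toReal := by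
        rw [mul_comm]; gcongr
    _ ≤ ∫ x in cone K, exp (-‖x‖ ^ 2) :=
        exp_neg_sq_mul_volume_le_setIntegral_exp_neg_sq_norm
          (hK.smul r).isClosed.measurableSet (smul_subset_cone hr K) hball

end Gaussian

theorem gaussian_integral_cone_regular_lower_bound_general
    (d : ℕ) (hd : 2 ≤ d) (η : ℝ)
    (S : Affine.Simplex ℝ (EuclideanSpace ℝ (Fin d)) d)
    (h0 : ∃ i : Fin (d + 1), S.points i = 0)
    (hreg : η * (⨆ i : Fin (d + 1), ⨆ j : Fin (d + 1),
          dist (S.points i) (S.points j)) ^ d ≤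
        (volume (convexHull ℝ (Set.range S.points))).toReal) :
    η * ((d : ℝ) / 2) ^ ((d : ℝ) / 2) * Real.exp (-(d : ℝ) / 2) ≤
      ∫ γ in {x : EuclideanSpace ℝ (Fin d) |
          ∃ t : ℝ, 0 ≤ t ∧ ∃ γ' ∈ convexHull ℝ (Set.range S.points), x = t • γ'},
        Real.exp (-‖γ‖ ^ 2) := by
  obtain ⟨i₀, hi₀⟩ := h0
  have hKh : convexHull ℝ (range S.points) ⊆
      closedBall 0 (⨆ i, ⨆ j, dist (S.points i) (S.points j)) :=
    convexHull_min (range_subset_iff.2 fun i ↦ by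
      simpa [← hi₀] using dist_le_iSup₂_dist S.points i i₀) (convex_closedBall _ _)
  have key := mul_pow_mul_exp_neg_sq_le_setIntegral_cone
    ((finite_range S.points).isCompact_convexHull (𝕜 := ℝ)) (S.iSup₂_dist_pos (by omega)) hKh
    (by rwa [finrank_euclideanSpace_fin]) (sqrt_nonneg ((d : ℝ) / 2))
  rw [neg_div]
  rwa [finrank_euclideanSpace_fin, sq_sqrt (by positivity), sqrt_eq_rpow, ← rpow_natCast,
    ← rpow_mul (by positivity), one_div_mul_eq_div] at key

/-- **Uniform lower bound for the Gaussian integral over the cone of a regular simplex.**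
Let `d ≥ 2`, `η > 0`, and let `S` be a `d`-simplex in `ℝ^d` having the origin as a vertex and
satisfying the regularity condition `vol(S) ≥ η * h(S)^d`, where `h(S)` is the longest edge
length. Then `∫_{cone(S)} e^{-‖γ‖²} dγ ≥ η * (d/2)^(d/2) * e^{-d/2}`. -/
theorem gaussian_integral_cone_regular_lower_bound
    (d : ℕ) (hd : 2 ≤ d) (η : ℝ) (hη : 0 < η)
    (S : Affine.Simplex ℝ (EuclideanSpace ℝ (Fin d)) d)
    (h0 : ∃ i : Fin (d + 1), S.points i = 0)
    (hreg : η * (⨆ i : Fin (d + 1), ⨆ j : Fin (d + 1),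
          dist (S.points i) (S.points j)) ^ d ≤
        (volume (convexHull ℝ (Set.range S.points))).toReal) :
    η * ((d : ℝ) / 2) ^ ((d : ℝ) / 2) * Real.exp (-(d : ℝ) / 2) ≤
      ∫ γ in {x : EuclideanSpace ℝ (Fin d) |
          ∃ t : ℝ, 0 ≤ t ∧ ∃ γ' ∈ convexHull ℝ (Set.range S.points), x = t • γ'},
        Real.exp (-‖γ‖ ^ 2) :=
  gaussian_integral_cone_regular_lower_bound_general d hd η S h0 hreg
end
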